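/- arXiv:1608.06170 — 6 statements merged into one kernel-verified Lean document; each statement's English description precedes it below -/
import Mathlib

section
/- Let n ≥ 3 and let p, q be nonnegative integers with (p,q) ≠ (0,0). Let A be an n×n 0-1 matrix such that f(A(i)) ≤ (n−1)(n−2)/2 − p(n−1)/2 − q for every i ∈ {1,…,n} (an inequality of rational numbers). Then f(A) ≤ n(n−1)/2 − p(n+1)/2 − q − 1. -/
/-- A 0-1 matrix: all entries in {0,1}. -/
def isZeroOne {n : ℕ} (A : Matrix (Fin n) (Fin n) ℕ) : Prop :=
  ∀ i j, A i j = 0 ∨ A i j = 1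

/-- `f(A)`: the number of entries of `A` equal to one. -/
def fOnes {m n : ℕ} (A : Matrix (Fin m) (Fin n) ℕ) : ℕ :=
  (Finset.univ.filter (fun p : Fin m × Fin n => A p.1 p.2 = 1)).card

/-- The strictly increasing map `Fin (n-1) → Fin n` skipping the index `i`;
`A.submatrix (delMap i) (delMap i)` is the principal submatrix `A(i)` obtained
from `A` by deleting its `i`-th row and column. -/
def delMap {n : ℕ} (i : Fin n) (j : Fin (n - 1)) : Fin n :=
  if h : (j : ℕ) < (i : ℕ) then ⟨j, h.trans i.isLt⟩
  else ⟨(j : ℕ) + 1, by have := j.isLt; omega⟩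

/-!
Each one-entry `(a, b)` of `A` survives in `A(i)` for every `i ∉ {a, b}`, so
`(n - 2) f(A) ≤ ∑ᵢ f(A(i)) ≤ n ⌊E / 2⌋` with `E = (n-1)(n-2) - p(n-1) - 2q`.
The doubled target `T = n(n-1) - p(n+1) - 2q - 2` has the parity of `E` and satisfies
`nE = (n-2)(T+2) - 2(p+2q)`; as `p + 2q ≥ 1`, integrality then forces `2 f(A) ≤ T`.
-/

open Finset

theorem two_mul_le_of_sub_two_mul_le {n S M E T : ℤ} (hn : 2 < n)
    (hS : (n - 2) * S ≤ n * M) (hM : 2 * M ≤ E) (hET : Even (T - E))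
    (hT : n * E + 2 ≤ (n - 2) * (T + 2)) : 2 * S ≤ T := by
  by_contra! hTS
  -- the two slacks `2S - T > 0` and `E - 2M ≥ 0` have an even sum
  have hslack : 2 ≤ (2 * S - T) + (E - 2 * M) := by
    obtain ⟨k, hk⟩ := hET
    omega
  nlinarith [mul_le_mul_of_nonneg_left hslack (by omega : (0 : ℤ) ≤ n - 2)]

section delMap

variable {n : ℕ} (i : Fin n)

theorem delMap_ne (j : Fin (n - 1)) : delMap i j ≠ i := by
  unfold delMap
  split <;> simp only [ne_eq, Fin.ext_iff] <;> omega

theorem delMap_injective : Function.Injective (delMap i) := by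
  intro a b h
  unfold delMap at h
  split at h <;> split at h <;> simp only [Fin.ext_iff] at h <;> omega

theorem exists_delMap_eq {k : Fin n} (hk : k ≠ i) : ∃ j, delMap i j = k := by
  rw [Ne, Fin.ext_iff] at hk
  rcases lt_or_gt_of_ne hk with hlt | hgt
  · exact ⟨⟨k, by omega⟩, by simp [delMap, hlt]⟩
  · refine ⟨⟨k - 1, by omega⟩, ?_⟩
    rw [delMap, dif_neg (by simp only; omega)]
    ext
    simp only
    omega

theorem fOnes_submatrix_delMap (A : Matrix (Fin n) (Fin n) ℕ) :
    fOnes (A.submatrix (delMap i) (delMap i)) =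
      #{p : Fin n × Fin n | A p.1 p.2 = 1 ∧ p.1 ≠ i ∧ p.2 ≠ i} := by
  unfold fOnes
  refine card_nbij (Prod.map (delMap i) (delMap i)) ?_ ?_ ?_
  · intro p hp
    rw [mem_coe, mem_filter_univ] at hp ⊢
    exact ⟨hp, delMap_ne i p.1, delMap_ne i p.2⟩
  · exact ((delMap_injective i).prodMap (delMap_injective i)).injOn
  · rintro ⟨k, l⟩ hkl
    simp only [mem_coe, mem_filter_univ] at hkl
    obtain ⟨hA, hk, hl⟩ := hkl
    obtain ⟨j, rfl⟩ := exists_delMap_eq i hk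
    obtain ⟨j', rfl⟩ := exists_delMap_eq i hl
    exact ⟨(j, j'), by rw [mem_coe, mem_filter_univ]; exact hA, rfl⟩

end delMap

theorem sub_two_mul_fOnes_le_sum {n : ℕ} (A : Matrix (Fin n) (Fin n) ℕ) :
    (n - 2) * fOnes A ≤ ∑ i : Fin n, fOnes (A.submatrix (delMap i) (delMap i)) := by
  let ones : Finset (Fin n × Fin n) := {p | A p.1 p.2 = 1}
  let avoids (p : Fin n × Fin n) (i : Fin n) : Prop := p.1 ≠ i ∧ p.2 ≠ i
  have hbelow (i : Fin n) : fOnes (A.submatrix (delMap i) (delMap i)) =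
      #(ones.bipartiteBelow avoids i) := by
    rw [fOnes_submatrix_delMap, bipartiteBelow, filter_filter]
  have habove (p : Fin n × Fin n) : n - 2 ≤ #(univ.bipartiteAbove avoids p) := by
    have : univ.bipartiteAbove avoids p = {p.1, p.2}ᶜ := by
      ext i; simp [bipartiteAbove, avoids, eq_comm]
    rw [this, card_compl, Fintype.card_fin]
    have := card_le_two (a := p.1) (b := p.2)
    omega
  calc (n - 2) * fOnes A = ∑ _p ∈ ones, (n - 2) := by simp [fOnes, ones, mul_comm]
    _ ≤ ∑ p ∈ ones, #(univ.bipartiteAbove avoids p) := sum_le_sum fun p _ => habove p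
    _ = ∑ i : Fin n, fOnes (A.submatrix (delMap i) (delMap i)) := by
      simp only [sum_card_bipartiteAbove_eq_sum_card_bipartiteBelow, hbelow]

theorem stmt3_general (n p q : ℕ) (hn : 3 ≤ n) (hpq : ¬(p = 0 ∧ q = 0))
    (A : Matrix (Fin n) (Fin n) ℕ)
    (h : ∀ i : Fin n,
      (fOnes (A.submatrix (delMap i) (delMap i)) : ℚ) ≤
        ((n : ℚ) - 1) * ((n : ℚ) - 2) / 2 - (p : ℚ) * ((n : ℚ) - 1) / 2 - (q : ℚ)) :
    (fOnes A : ℚ) ≤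
      (n : ℚ) * ((n : ℚ) - 1) / 2 - (p : ℚ) * ((n : ℚ) + 1) / 2 - (q : ℚ) - 1 := by
  obtain ⟨E, hE⟩ : ∃ E : ℤ, E = ((n : ℤ) - 1) * (n - 2) - p * (n - 1) - 2 * q := ⟨_, rfl⟩
  have hsub (i : Fin n) : (fOnes (A.submatrix (delMap i) (delMap i)) : ℤ) ≤ E / 2 := by
    rw [Int.le_ediv_iff_mul_le two_pos]
    exact_mod_cast (by push_cast [hE]; linarith [h i] :
      ((fOnes (A.submatrix (delMap i) (delMap i)) * 2 : ℤ) : ℚ) ≤ E)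
  have hsum : ((n : ℤ) - 2) * fOnes A ≤ n * (E / 2) := by
    have := Nat.cast_le (α := ℤ) |>.mpr (sub_two_mul_fOnes_le_sum A)
    push_cast [Nat.cast_sub (by omega : 2 ≤ n)] at this
    refine this.trans ((sum_le_sum fun i _ => hsub i).trans ?_)
    simp
  have hpq' : 1 ≤ (p : ℤ) + 2 * q := by omega
  have key := two_mul_le_of_sub_two_mul_le (T := n * (n - 1) - p * (n + 1) - 2 * q - 2)
    (by omega) hsum (Int.mul_ediv_self_le two_ne_zero) ⟨n - 2 - p, by rw [hE]; ring⟩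
    (by rw [hE]; linear_combination 2 * hpq')
  have := (Int.cast_le (R := ℚ)).mpr key
  push_cast at this
  linarith

/-- if `n ≥ 3`, `(p,q) ≠ (0,0)` and the n×n 0-1 matrix `A`
satisfies `f(A(i)) ≤ (n−1)(n−2)/2 − p(n−1)/2 − q` for every `i` (as rationals),
then `f(A) ≤ n(n−1)/2 − p(n+1)/2 − q − 1`. -/
theorem stmt3 (n p q : ℕ) (hn : 3 ≤ n) (hpq : ¬(p = 0 ∧ q = 0))
    (A : Matrix (Fin n) (Fin n) ℕ) (h01 : isZeroOne A)
    (h : ∀ i : Fin n,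
      (fOnes (A.submatrix (delMap i) (delMap i)) : ℚ) ≤
        ((n : ℚ) - 1) * ((n : ℚ) - 2) / 2 - (p : ℚ) * ((n : ℚ) - 1) / 2 - (q : ℚ)) :
    (fOnes A : ℚ) ≤
      (n : ℚ) * ((n : ℚ) - 1) / 2 - (p : ℚ) * ((n : ℚ) + 1) / 2 - (q : ℚ) - 1 :=
  stmt3_general n p q hn hpq A h
end

section
/- Let m = k + t + s + 1 with integers s ≥ 1, k ≥ 1, t ≥ 3, and let A = (a_{ij}) be the m×m 0-1 matrix in block form with block row/column sizes (k, t, s, 1): the first block row is [0_{k×k}, J_{k,t}, J_{k,s}, x₁], the second is [0, T_t, J_{t,s}, x₂], the third is [0, 0, 0, x₃], and the last row is [y₁ᵀ, y₂ᵀ, y₃ᵀ, α], where x₁,y₁ ∈ {0,1}^k, x₂,y₂ ∈ {0,1}^t, x₃,y₃ ∈ {0,1}^s and α ∈ {0,1}. If A ∈ Γ(m, t+1) and f(x₁)+f(x₂)+f(x₃)+f(y₁)+f(y₂)+f(y₃)+α ≥ s+k+2, then α = 0, y₁ = 0, x₃ = 0, and a_{i,m}·a_{m,j} = 0 for all 1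 ≤ i, j ≤ m−1 with j ≤ i+2. -/
/-- `f(x)` for a 0-1 vector: the number of its entries equal to one. -/
def fVec {n : ℕ} (x : Fin n → ℕ) : ℕ :=
  (Finset.univ.filter (fun i => x i = 1)).card

/-- `Γ(n,k)`: n×n 0-1 matrices whose k-th power is again a 0-1 matrix. -/
def Gamma (n k : ℕ) (A : Matrix (Fin n) (Fin n) ℕ) : Prop :=
  isZeroOne A ∧ ∀ i j, (A ^ k) i j = 0 ∨ (A ^ k) i j = 1

/-- The m×m matrix (m = k+t+s+1) with block row/column sizes (k,t,s,1):
`[[0, J_{k,t}, J_{k,s}, x₁], [0, T_t, J_{t,s}, x₂], [0, 0, 0, x₃],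
[y₁ᵀ, y₂ᵀ, y₃ᵀ, α]]`. -/
def BlockA (k t s : ℕ) (x₁ y₁ : Fin k → ℕ) (x₂ y₂ : Fin t → ℕ)
    (x₃ y₃ : Fin s → ℕ) (α : ℕ) :
    Matrix (Fin (k + t + s + 1)) (Fin (k + t + s + 1)) ℕ :=
  fun i j =>
    if hi1 : (i : ℕ) < k then
      if (j : ℕ) < k then 0
      else if (j : ℕ) < k + t + s then 1
      else x₁ ⟨i, hi1⟩
    else if hi2 : (i : ℕ) < k + t then
      if (j : ℕ) < k then 0
      else if (j : ℕ) < k + t then (if (i : ℕ) < (j : ℕ) then 1 else 0)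
      else if (j : ℕ) < k + t + s then 1
      else x₂ ⟨(i : ℕ) - k, by omega⟩
    else if hi3 : (i : ℕ) < k + t + s then
      if (j : ℕ) < k + t + s then 0
      else x₃ ⟨(i : ℕ) - (k + t), by omega⟩
    else
      if hj1 : (j : ℕ) < k then y₁ ⟨j, hj1⟩
      else if hj2 : (j : ℕ) < k + t then y₂ ⟨(j : ℕ) - k, by omega⟩
      else if hj3 : (j : ℕ) < k + t + s then y₃ ⟨(j : ℕ) - (k + t), by omega⟩
      else α

/-!
Over `ℕ` the entry `(A ^ n) i j` counts the walks of length `n` from `i` to `j` in the digraph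
of `A`, so `A ∈ Γ(m, t + 1)` forbids two walks of length `t + 1` with the same ends that pass
through different vertices after the same number of steps. The blocks `J` and the transitive
tournament `T_t` supply walks of many lengths: from the first block to position `c` of `T_t` in
any `p ∈ [1, c + 1]` steps, and from position `a` of `T_t` to the third block in any
`p ∈ [1, t - a]` steps; if `α = 1`, the loop at the last vertex pads a walk to any length.
Each conclusion is proved by exhibiting two such walks under the contrary assumption. For
`α = 1` they show that `x₂` and `y₂` have at most one nonzero entry and that `x₁ = 0`, resp.
`y₃ = 0`, when they have one; with `x₃ = 0` and `y₁ = 0` this caps the count in the hypothesis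
at `k + s + 1`.
-/

theorem fVec_le {n : ℕ} (x : Fin n → ℕ) : fVec x ≤ n :=
  (Finset.card_filter_le _ _).trans_eq (Finset.card_fin n)

theorem fVec_zero {n : ℕ} : fVec (0 : Fin n → ℕ) = 0 := by
  simp [fVec]

theorem fVec_add_fVec_le {m n : ℕ} {x : Fin m → ℕ} {y : Fin n → ℕ} (hn : 1 ≤ n)
    (hx : ∀ i j, 0 < x i → 0 < x j → i = j) (hxy : ∀ i, 0 < x i → y = 0) :
    fVec x + fVec y ≤ n := by
  by_cases h : ∃ i, 0 < x i
  · obtain ⟨i, hi⟩ := h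
    have hx₁ : fVec x ≤ 1 := Finset.card_le_one.2 fun a ha b hb => by
      simp only [Finset.mem_filter] at ha hb
      exact hx a b (by omega) (by omega)
    rw [hxy i hi, fVec_zero]
    omega
  · simp only [not_exists, not_lt] at h
    have hx₀ : fVec x = 0 :=
      Finset.card_eq_zero.2 (Finset.filter_eq_empty_iff.2 fun i _ => by have := h i; omega)
    have := fVec_le y
    omega

namespace Matrix

variable {n : Type*} [Fintype n]

theorem pos_mul_apply {X Y : Matrix n n ℕ} {i j l : n} (hil : 0 < X i l) (hlj : 0 < Y l j) :
    0 < (X * Y) i j := by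
  rw [mul_apply]
  exact lt_of_lt_of_le (Nat.mul_pos hil hlj)
    (Finset.single_le_sum (fun c _ => Nat.zero_le (X i c * Y c j)) (Finset.mem_univ l))

theorem two_le_mul_apply {X Y : Matrix n n ℕ} {i j l l' : n} (hl : l ≠ l')
    (hil : 0 < X i l) (hlj : 0 < Y l j) (hil' : 0 < X i l') (hl'j : 0 < Y l' j) :
    2 ≤ (X * Y) i j := by
  classical
  have hpair : X i l * Y l j + X i l' * Y l' j ≤ (X * Y) i j := by
    rw [mul_apply, ← Finset.sum_pair (f := fun c => X i c * Y c j) hl]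
    exact Finset.sum_le_sum_of_subset (Finset.subset_univ _)
  have := Nat.mul_pos hil hlj
  have := Nat.mul_pos hil' hl'j
  omega

variable [DecidableEq n] {A : Matrix n n ℕ} {a b m : ℕ} {i j l l' : n}

theorem pos_pow_one_apply (h : 0 < A i j) : 0 < (A ^ 1) i j := by
  rwa [pow_one]

theorem pos_pow_apply_of_add_eq (hm : a + b = m) (hil : 0 < (A ^ a) i l)
    (hlj : 0 < (A ^ b) l j) : 0 < (A ^ m) i j := by
  rw [← hm, pow_add]
  exact pos_mul_apply hil hlj

theorem two_le_pow_apply_of_add_eq (hm : a + b = m) (hl : l ≠ l')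
    (hil : 0 < (A ^ a) i l) (hlj : 0 < (A ^ b) l j)
    (hil' : 0 < (A ^ a) i l') (hl'j : 0 < (A ^ b) l' j) : 2 ≤ (A ^ m) i j := by
  rw [← hm, pow_add]
  exact two_le_mul_apply hl hil hlj hil' hl'j

end Matrix

namespace BlockA

variable {k t s : ℕ}

-- The vertices of the three blocks of size `k`, `t`, `s`; the last vertex is `Fin.last _`.

def kIdx (u : Fin k) : Fin (k + t + s + 1) := ((u.castAdd t).castAdd s).castSucc

def tIdx (a : Fin t) : Fin (k + t + s + 1) := ((a.natAdd k).castAdd s).castSucc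

def sIdx (b : Fin s) : Fin (k + t + s + 1) := (b.natAdd (k + t)).castSucc

@[simp] theorem val_kIdx (u : Fin k) : (kIdx u : Fin (k + t + s + 1)).val = u := rfl

@[simp] theorem val_tIdx (a : Fin t) : (tIdx a : Fin (k + t + s + 1)).val = k + a := rfl

@[simp] theorem val_sIdx (b : Fin s) : (sIdx b : Fin (k + t + s + 1)).val = k + t + b := rfl

theorem tIdx_injective : Function.Injective (tIdx : Fin t → Fin (k + t + s + 1)) :=
  fun a b h => Fin.ext (by simpa using congrArg Fin.val h)

@[elab_as_elim]
theorem blockCases {P : Fin (k + t + s + 1) → Prop} (first : ∀ u, P (kIdx u))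
    (middle : ∀ a, P (tIdx a)) (third : ∀ b, P (sIdx b)) (last : P (Fin.last _))
    (i : Fin (k + t + s + 1)) : P i := by
  refine Fin.lastCases last (fun i => ?_) i
  exact Fin.addCases (fun i => Fin.addCases first middle i) third i

variable {x₁ y₁ : Fin k → ℕ} {x₂ y₂ : Fin t → ℕ} {x₃ y₃ : Fin s → ℕ} {α : ℕ}

local notation "A" => BlockA k t s x₁ y₁ x₂ y₂ x₃ y₃ α

-- `omega` treats `↑(sIdx b)` and `↑(Fin.last _)` as atoms, hence the explicit values below.

theorem pos_apply_kIdx_tIdx (u : Fin k) (a : Fin t) : 0 < A (kIdx u) (tIdx a) := by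
  have := val_kIdx (t := t) (s := s) u
  have := val_tIdx (k := k) (s := s) a
  unfold BlockA; split_ifs <;> omega

theorem pos_apply_tIdx_tIdx {a b : Fin t} (hab : a < b) : 0 < A (tIdx a) (tIdx b) := by
  have := val_tIdx (k := k) (s := s) a
  have := val_tIdx (k := k) (s := s) b
  rw [Fin.lt_def] at hab
  unfold BlockA; split_ifs <;> omega

theorem pos_apply_tIdx_sIdx (a : Fin t) (b : Fin s) : 0 < A (tIdx a) (sIdx b) := by
  have := val_tIdx (k := k) (s := s) a
  have := val_sIdx (k := k) (t := t) b
  unfold BlockA; split_ifs <;> omega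

@[simp] theorem apply_kIdx_last (u : Fin k) : A (kIdx u) (Fin.last _) = x₁ u := by
  have := val_kIdx (t := t) (s := s) u
  have := Fin.val_last (k + t + s)
  unfold BlockA; split_ifs <;> first | omega | simp

@[simp] theorem apply_tIdx_last (a : Fin t) : A (tIdx a) (Fin.last _) = x₂ a := by
  have := val_tIdx (k := k) (s := s) a
  have := Fin.val_last (k + t + s)
  unfold BlockA; split_ifs <;> first | omega | simp

@[simp] theorem apply_sIdx_last (b : Fin s) : A (sIdx b) (Fin.last _) = x₃ b := by
  have := val_sIdx (k := k) (t := t) b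
  have := Fin.val_last (k + t + s)
  unfold BlockA; split_ifs <;> first | omega | simp

@[simp] theorem apply_last_kIdx (u : Fin k) : A (Fin.last _) (kIdx u) = y₁ u := by
  have := val_kIdx (t := t) (s := s) u
  have := Fin.val_last (k + t + s)
  unfold BlockA; split_ifs <;> first | omega | simp

@[simp] theorem apply_last_tIdx (a : Fin t) : A (Fin.last _) (tIdx a) = y₂ a := by
  have := val_tIdx (k := k) (s := s) a
  have := Fin.val_last (k + t + s)
  unfold BlockA; split_ifs <;> first | omega | simp

@[simp] theorem apply_last_sIdx (b : Fin s) : A (Fin.last _) (sIdx b) = y₃ b := by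
  have := val_sIdx (k := k) (t := t) b
  have := Fin.val_last (k + t + s)
  unfold BlockA; split_ifs <;> first | omega | simp

@[simp] theorem apply_last_last : A (Fin.last _) (Fin.last _) = α := by
  have := Fin.val_last (k + t + s)
  unfold BlockA; split_ifs <;> omega

theorem pos_pow_tIdx_tIdx {p : ℕ} {a b : Fin t} (hab : (a : ℕ) + p = b) :
    0 < (A ^ p) (tIdx a) (tIdx b) := by
  induction p generalizing a with
  | zero =>
    obtain rfl : a = b := Fin.ext (by simpa using hab)
    simp
  | succ p ih =>
    have ha : (a : ℕ) + 1 < t := by omega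
    exact Matrix.pos_pow_apply_of_add_eq (Nat.add_comm 1 p)
      (Matrix.pos_pow_one_apply (pos_apply_tIdx_tIdx (b := ⟨a + 1, ha⟩) (Fin.lt_def.2 (by simp))))
      (ih (by simp; omega))

theorem pos_pow_tIdx_sIdx {p : ℕ} {a : Fin t} (b : Fin s) (hp : 1 ≤ p) (hap : a + p ≤ t) :
    0 < (A ^ p) (tIdx a) (sIdx b) :=
  Matrix.pos_pow_apply_of_add_eq (Nat.sub_add_cancel hp)
    (pos_pow_tIdx_tIdx (b := ⟨a + (p - 1), by omega⟩) rfl)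
    (Matrix.pos_pow_one_apply (pos_apply_tIdx_sIdx _ b))

theorem pos_pow_kIdx_tIdx {p : ℕ} (u : Fin k) {c : Fin t} (hp : 1 ≤ p) (hpc : p ≤ c + 1) :
    0 < (A ^ p) (kIdx u) (tIdx c) :=
  Matrix.pos_pow_apply_of_add_eq (Nat.add_sub_cancel' hp)
    (Matrix.pos_pow_one_apply (pos_apply_kIdx_tIdx u ⟨c - (p - 1), by omega⟩))
    (pos_pow_tIdx_tIdx (by simp; omega))

theorem pos_pow_last_last (hα : 0 < α) (p : ℕ) : 0 < (A ^ p) (Fin.last _) (Fin.last _) := by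
  induction p with
  | zero => simp
  | succ p ih =>
    exact Matrix.pos_pow_apply_of_add_eq rfl ih (Matrix.pos_pow_one_apply (by simpa using hα))

theorem tIdx_ne_last (a : Fin t) : (tIdx a : Fin (k + t + s + 1)) ≠ Fin.last _ :=
  Fin.castSucc_ne_last _

theorem pos_pow_to_last (hα : 0 < α) {i : Fin (k + t + s + 1)} (hi : 0 < A i (Fin.last _))
    {p : ℕ} (hp : 1 ≤ p) : 0 < (A ^ p) i (Fin.last _) :=
  Matrix.pos_pow_apply_of_add_eq (Nat.add_sub_cancel' hp) (Matrix.pos_pow_one_apply hi)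
    (pos_pow_last_last hα _)

theorem pos_pow_from_last (hα : 0 < α) {j : Fin (k + t + s + 1)} (hj : 0 < A (Fin.last _) j)
    {p : ℕ} (hp : 1 ≤ p) : 0 < (A ^ p) (Fin.last _) j :=
  Matrix.pos_pow_apply_of_add_eq (Nat.sub_add_cancel hp) (pos_pow_last_last hα _)
    (Matrix.pos_pow_one_apply hj)

theorem false_of_two_walks (hA : ∀ i j, (A ^ (t + 1)) i j ≤ 1) {a b : ℕ}
    {i j l l' : Fin (k + t + s + 1)} (hab : a + b = t + 1) (hl : l ≠ l')
    (hil : 0 < (A ^ a) i l) (hlj : 0 < (A ^ b) l j)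
    (hil' : 0 < (A ^ a) i l') (hl'j : 0 < (A ^ b) l' j) : False := by
  have := Matrix.two_le_pow_apply_of_add_eq hab hl hil hlj hil' hl'j
  have := hA i j
  omega

theorem x₃_eq_zero (hA : ∀ i j, (A ^ (t + 1)) i j ≤ 1) (hk : 1 ≤ k) (ht : 3 ≤ t) : x₃ = 0 := by
  funext b
  rw [Pi.zero_apply]
  refine Nat.eq_zero_of_not_pos fun hb => ?_
  have walk (c : Fin t) (hc : (c : ℕ) ≤ 1) : 0 < (A ^ t) (tIdx c) (Fin.last _) :=
    Matrix.pos_pow_apply_of_add_eq (Nat.sub_add_cancel (by omega : 1 ≤ t))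
      (pos_pow_tIdx_sIdx b (by omega) (by omega))
      (Matrix.pos_pow_one_apply (by rwa [apply_sIdx_last]))
  exact false_of_two_walks hA (i := kIdx ⟨0, hk⟩) (l := tIdx ⟨0, by omega⟩)
    (l' := tIdx ⟨1, by omega⟩) (Nat.add_comm 1 t) (tIdx_injective.ne (by simp))
    (Matrix.pos_pow_one_apply (pos_apply_kIdx_tIdx _ _)) (walk _ (by simp))
    (Matrix.pos_pow_one_apply (pos_apply_kIdx_tIdx _ _)) (walk _ (by simp))

theorem y₁_eq_zero (hA : ∀ i j, (A ^ (t + 1)) i j ≤ 1) (ht : 3 ≤ t) (hs : 1 ≤ s) : y₁ = 0 := by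
  funext u
  rw [Pi.zero_apply]
  refine Nat.eq_zero_of_not_pos fun hu => ?_
  have walk_to (c : Fin t) : 0 < (A ^ 2) (Fin.last _) (tIdx c) :=
    Matrix.pos_pow_apply_of_add_eq rfl
      (Matrix.pos_pow_one_apply (by rwa [apply_last_kIdx]))
      (Matrix.pos_pow_one_apply (pos_apply_kIdx_tIdx u c))
  have walk_from (c : Fin t) (hc : (c : ℕ) ≤ 1) : 0 < (A ^ (t - 1)) (tIdx c) (sIdx ⟨0, hs⟩) :=
    pos_pow_tIdx_sIdx _ (by omega) (by omega)
  exact false_of_two_walks hA (l := tIdx ⟨0, by omega⟩) (l' := tIdx ⟨1, by omega⟩)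
    (by omega : 2 + (t - 1) = t + 1) (tIdx_injective.ne (by simp))
    (walk_to _) (walk_from _ (by simp)) (walk_to _) (walk_from _ (by simp))

theorem eq_of_pos_x₂ (hA : ∀ i j, (A ^ (t + 1)) i j ≤ 1) (hk : 1 ≤ k) (hα : 0 < α)
    {q q' : Fin t} (hq : 0 < x₂ q) (hq' : 0 < x₂ q') : q = q' := by
  by_contra hne
  have walk (c : Fin t) (hc : 0 < x₂ c) : 0 < (A ^ t) (tIdx c) (Fin.last _) :=
    pos_pow_to_last hα (by rwa [apply_tIdx_last]) (Fin.pos c)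
  exact false_of_two_walks hA (i := kIdx ⟨0, hk⟩) (Nat.add_comm 1 t) (tIdx_injective.ne hne)
    (Matrix.pos_pow_one_apply (pos_apply_kIdx_tIdx _ _)) (walk q hq)
    (Matrix.pos_pow_one_apply (pos_apply_kIdx_tIdx _ _)) (walk q' hq')

theorem x₁_eq_zero_of_pos_x₂ (hA : ∀ i j, (A ^ (t + 1)) i j ≤ 1) (hα : 0 < α) {q : Fin t}
    (hq : 0 < x₂ q) : x₁ = 0 := by
  funext u
  rw [Pi.zero_apply]
  refine Nat.eq_zero_of_not_pos fun hu => ?_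
  exact false_of_two_walks hA (Nat.add_comm 1 t) (tIdx_ne_last q)
    (Matrix.pos_pow_one_apply (pos_apply_kIdx_tIdx u q))
    (pos_pow_to_last hα (by rwa [apply_tIdx_last]) (Fin.pos q))
    (Matrix.pos_pow_one_apply (by rwa [apply_kIdx_last]))
    (pos_pow_last_last hα t)

theorem eq_of_pos_y₂ (hA : ∀ i j, (A ^ (t + 1)) i j ≤ 1) (hs : 1 ≤ s) (hα : 0 < α)
    {q q' : Fin t} (hq : 0 < y₂ q) (hq' : 0 < y₂ q') : q = q' := by
  by_contra hne
  have walk (c : Fin t) (hc : 0 < y₂ c) : 0 < (A ^ t) (Fin.last _) (tIdx c) :=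
    pos_pow_from_last hα (by rwa [apply_last_tIdx]) (Fin.pos c)
  exact false_of_two_walks hA (j := sIdx ⟨0, hs⟩) rfl (tIdx_injective.ne hne)
    (walk q hq) (Matrix.pos_pow_one_apply (pos_apply_tIdx_sIdx _ _))
    (walk q' hq') (Matrix.pos_pow_one_apply (pos_apply_tIdx_sIdx _ _))

theorem y₃_eq_zero_of_pos_y₂ (hA : ∀ i j, (A ^ (t + 1)) i j ≤ 1) (hα : 0 < α) {q : Fin t}
    (hq : 0 < y₂ q) : y₃ = 0 := by
  funext b
  rw [Pi.zero_apply]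
  refine Nat.eq_zero_of_not_pos fun hb => ?_
  exact false_of_two_walks hA rfl (tIdx_ne_last q)
    (pos_pow_from_last hα (by rwa [apply_last_tIdx]) (Fin.pos q))
    (Matrix.pos_pow_one_apply (pos_apply_tIdx_sIdx q b))
    (pos_pow_last_last hα t)
    (Matrix.pos_pow_one_apply (by rwa [apply_last_sIdx]))

theorem x₁_mul_y₂_eq_zero (hA : ∀ i j, (A ^ (t + 1)) i j ≤ 1) (ht : 3 ≤ t) (hs : 1 ≤ s)
    (u : Fin k) {c : Fin t} (hc : (c : ℕ) ≤ 1) : x₁ u * y₂ c = 0 := by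
  refine Nat.eq_zero_of_not_pos fun h => ?_
  exact false_of_two_walks hA (l := tIdx ⟨0, by omega⟩) (j := sIdx ⟨0, hs⟩) (Nat.add_comm 1 t)
    (tIdx_ne_last _)
    (Matrix.pos_pow_one_apply (pos_apply_kIdx_tIdx u _))
    (pos_pow_tIdx_sIdx _ (by omega) (by simp))
    (Matrix.pos_pow_one_apply (by simpa using Nat.pos_of_mul_pos_right h))
    (Matrix.pos_pow_apply_of_add_eq (Nat.add_sub_cancel' (by omega : 1 ≤ t))
      (Matrix.pos_pow_one_apply (by simpa using Nat.pos_of_mul_pos_left h))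
      (pos_pow_tIdx_sIdx _ (by omega) (by omega)))

theorem x₂_mul_y₂_eq_zero (hA : ∀ i j, (A ^ (t + 1)) i j ≤ 1) (hk : 1 ≤ k) (ht : 3 ≤ t)
    (hs : 1 ≤ s) {q c : Fin t} (hqc : (c : ℕ) ≤ q + 2) : x₂ q * y₂ c = 0 := by
  refine Nat.eq_zero_of_not_pos fun h => ?_
  -- `p ≤ q + 1` leaves time to reach `tIdx q` in `p` steps, `p ≤ t - 2` to go from the last
  -- vertex through `tIdx c` to the third block in the remaining `t - p` steps.
  set p := min ((q : ℕ) + 1) (t - 2) with hp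
  exact false_of_two_walks hA (i := kIdx ⟨0, hk⟩) (j := sIdx ⟨0, hs⟩) (l := tIdx ⟨p, by omega⟩)
    (by omega : (p + 1) + (t - p) = t + 1) (tIdx_ne_last _)
    (pos_pow_kIdx_tIdx _ (by omega) (by simp))
    (pos_pow_tIdx_sIdx _ (by omega) (by simp; omega))
    (Matrix.pos_pow_apply_of_add_eq rfl (pos_pow_kIdx_tIdx (c := q) _ (by omega) (by omega))
      (Matrix.pos_pow_one_apply (by simpa using Nat.pos_of_mul_pos_right h)))
    (Matrix.pos_pow_apply_of_add_eq (by omega : 1 + (t - p - 1) = t - p)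
      (Matrix.pos_pow_one_apply (by simpa using Nat.pos_of_mul_pos_left h))
      (pos_pow_tIdx_sIdx _ (by omega) (by omega)))

theorem x₂_mul_y₃_eq_zero (hA : ∀ i j, (A ^ (t + 1)) i j ≤ 1) (hk : 1 ≤ k) (ht : 3 ≤ t)
    {q : Fin t} (hq : t ≤ q + 2) (b : Fin s) : x₂ q * y₃ b = 0 := by
  refine Nat.eq_zero_of_not_pos fun h => ?_
  exact false_of_two_walks hA (i := kIdx ⟨0, hk⟩) (l := tIdx ⟨t - 1, by omega⟩) rfl
    (tIdx_ne_last _)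
    (pos_pow_kIdx_tIdx _ (by omega) (by simp; omega))
    (Matrix.pos_pow_one_apply (pos_apply_tIdx_sIdx _ b))
    (Matrix.pos_pow_apply_of_add_eq (Nat.sub_add_cancel (by omega : 1 ≤ t))
      (pos_pow_kIdx_tIdx (c := q) _ (by omega) (by omega))
      (Matrix.pos_pow_one_apply (by simpa using Nat.pos_of_mul_pos_right h)))
    (Matrix.pos_pow_one_apply (by simpa using Nat.pos_of_mul_pos_left h))

theorem last_col_mul_last_row_eq_zero (hA : ∀ i j, (A ^ (t + 1)) i j ≤ 1) (hk : 1 ≤ k)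
    (ht : 3 ≤ t) (hs : 1 ≤ s) {i j : Fin (k + t + s + 1)} (hi : (i : ℕ) < k + t + s)
    (hj : (j : ℕ) < k + t + s) (hij : (j : ℕ) ≤ i + 2) :
    A i (Fin.last _) * A (Fin.last _) j = 0 := by
  have hx₃ := x₃_eq_zero hA hk ht
  have hy₁ := y₁_eq_zero hA ht hs
  induction i using blockCases with
  | first u =>
    induction j using blockCases with
    | first v => simp [hy₁]
    | middle c => simpa using x₁_mul_y₂_eq_zero hA ht hs u (c := c) (by simp at hij; omega)
    | third b => simp at hij; omega
    | last => simp at hj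
  | middle a =>
    induction j using blockCases with
    | first v => simp [hy₁]
    | middle c => simpa using x₂_mul_y₂_eq_zero hA hk ht hs (by simp at hij; omega)
    | third b => simpa using x₂_mul_y₃_eq_zero hA hk ht (q := a) (by simp at hij; omega) b
    | last => simp at hj
  | third b => simp [hx₃]
  | last => simp at hi

theorem fVec_sum_le_of_pos_alpha (hA : ∀ i j, (A ^ (t + 1)) i j ≤ 1) (hk : 1 ≤ k) (ht : 3 ≤ t)
    (hs : 1 ≤ s) (hα : 0 < α) :
    fVec x₁ + fVec x₂ + fVec x₃ + fVec y₁ + fVec y₂ + fVec y₃ ≤ k + s := by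
  have hx := fVec_add_fVec_le (x := x₂) (y := x₁) hk (fun _ _ => eq_of_pos_x₂ hA hk hα)
    (fun _ => x₁_eq_zero_of_pos_x₂ hA hα)
  have hy := fVec_add_fVec_le (x := y₂) (y := y₃) hs (fun _ _ => eq_of_pos_y₂ hA hs hα)
    (fun _ => y₃_eq_zero_of_pos_y₂ hA hα)
  rw [x₃_eq_zero hA hk ht, y₁_eq_zero hA ht hs, fVec_zero, fVec_zero]
  omega

end BlockA

theorem stmt4_general (k t s : ℕ) (hk : 1 ≤ k) (ht : 3 ≤ t) (hs : 1 ≤ s)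
    (x₁ y₁ : Fin k → ℕ) (x₂ y₂ : Fin t → ℕ) (x₃ y₃ : Fin s → ℕ) (α : ℕ)
    (hα : α = 0 ∨ α = 1)
    (hΓ : Gamma (k + t + s + 1) (t + 1) (BlockA k t s x₁ y₁ x₂ y₂ x₃ y₃ α))
    (hsum : s + k + 2 ≤
      fVec x₁ + fVec x₂ + fVec x₃ + fVec y₁ + fVec y₂ + fVec y₃ + α) :
    α = 0 ∧ y₁ = 0 ∧ x₃ = 0 ∧
      ∀ i j : Fin (k + t + s + 1),
        (i : ℕ) < k + t + s → (j : ℕ) < k + t + s → (j : ℕ) ≤ (i : ℕ) + 2 →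
        BlockA k t s x₁ y₁ x₂ y₂ x₃ y₃ α i (Fin.last (k + t + s)) *
          BlockA k t s x₁ y₁ x₂ y₂ x₃ y₃ α (Fin.last (k + t + s)) j = 0 := by
  have hA : ∀ i j, (BlockA k t s x₁ y₁ x₂ y₂ x₃ y₃ α ^ (t + 1)) i j ≤ 1 := fun i j => by
    rcases hΓ.2 i j with h | h <;> omega
  have hα₀ : α = 0 := by
    rcases hα with h | rfl
    · exact h
    · have := BlockA.fVec_sum_le_of_pos_alpha hA hk ht hs one_pos
      omega
  exact ⟨hα₀, BlockA.y₁_eq_zero hA ht hs, BlockA.x₃_eq_zero hA hk ht,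
    fun i j hi hj hij => BlockA.last_col_mul_last_row_eq_zero hA hk ht hs hi hj hij⟩

/-- Lemma 4: with `m = k+t+s+1`, `s ≥ 1`, `k ≥ 1`, `t ≥ 3`, if
the above block matrix lies in `Γ(m, t+1)` and
`f(x₁)+f(x₂)+f(x₃)+f(y₁)+f(y₂)+f(y₃)+α ≥ s+k+2`, then `α = 0`, `y₁ = 0`,
`x₃ = 0`, and `a_{i,m}·a_{m,j} = 0` for all `i, j ≤ m−1` with `j ≤ i+2`
(1-indexed). -/
theorem stmt4 (k t s : ℕ) (hk : 1 ≤ k) (ht : 3 ≤ t) (hs : 1 ≤ s)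
    (x₁ y₁ : Fin k → ℕ) (x₂ y₂ : Fin t → ℕ) (x₃ y₃ : Fin s → ℕ) (α : ℕ)
    (hx₁ : ∀ i, x₁ i = 0 ∨ x₁ i = 1) (hy₁ : ∀ i, y₁ i = 0 ∨ y₁ i = 1)
    (hx₂ : ∀ i, x₂ i = 0 ∨ x₂ i = 1) (hy₂ : ∀ i, y₂ i = 0 ∨ y₂ i = 1)
    (hx₃ : ∀ i, x₃ i = 0 ∨ x₃ i = 1) (hy₃ : ∀ i, y₃ i = 0 ∨ y₃ i = 1)
    (hα : α = 0 ∨ α = 1)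
    (hΓ : Gamma (k + t + s + 1) (t + 1) (BlockA k t s x₁ y₁ x₂ y₂ x₃ y₃ α))
    (hsum : s + k + 2 ≤
      fVec x₁ + fVec x₂ + fVec x₃ + fVec y₁ + fVec y₂ + fVec y₃ + α) :
    α = 0 ∧ y₁ = 0 ∧ x₃ = 0 ∧
      ∀ i j : Fin (k + t + s + 1),
        (i : ℕ) < k + t + s → (j : ℕ) < k + t + s → (j : ℕ) ≤ (i : ℕ) + 2 →
        BlockA k t s x₁ y₁ x₂ y₂ x₃ y₃ α i (Fin.last (k + t + s)) *
          BlockA k t s x₁ y₁ x₂ y₂ x₃ y₃ α (Fin.last (k + t + s)) j = 0 :=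
  stmt4_general k t s hk ht hs x₁ y₁ x₂ y₂ x₃ y₃ α hα hΓ hsum
end

section
/- Let n ≥ 6, let x, y ∈ {0,1}^{n−1} and β ∈ {0,1}, and let A be the n×n matrix with top-left (n−1)×(n−1) block T_{n−1}, last column (above the diagonal entry) x, last row (before the diagonal entry) yᵀ, and (n,n)-entry β. If A ∈ Γ(n, n−2) and f(x) + f(y) + β = n−2, then either (1) x = (1,…,1,0)ᵀ (n−2 ones followed by a 0), y = 0 and β = 0, or (2) y = (0,1,…,1)ᵀ (a 0 followed by n−2 ones), x = 0 and β = 0. -/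
/-- The n×n bordered matrix `[[T_{n−1}, x], [yᵀ, β]]`. -/
def Bord (n : ℕ) (x y : Fin (n - 1) → ℕ) (β : ℕ) : Matrix (Fin n) (Fin n) ℕ :=
  fun i j =>
    if hi : (i : ℕ) < n - 1 then
      if hj : (j : ℕ) < n - 1 then (if (i : ℕ) < (j : ℕ) then 1 else 0)
      else x ⟨i, hi⟩
    else
      if hj : (j : ℕ) < n - 1 then y ⟨j, hj⟩ else β


/-!
Read `Bord n x y β` as the adjacency matrix of a digraph: `0, …, n - 2` form the transitive
tournament (`i → j` for `i < j`), and the extra vertex `v = n - 1` has arcs `i → v` where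
`x i = 1`, `v → j` where `y j = 1`, and a loop iff `β = 1`. Since `(A ^ k) u w` counts walks,
membership in `Γ(n, n - 2)` forbids two walks of length `n - 2` with the same ends that are at
different vertices at some time. Such pairs of walks show that `x (n - 2) = 0`, `y 0 = 0`, that
with a loop at `v` neither `x` nor `y` has two ones (forcing `β = 0`, as `f(x) + f(y) ≥ 3`), and
that each one of `x` lies more than two places before each one of `y`. Counting, the last fact
contradicts `f(x) + f(y) = n - 2` unless `x = 0` or `y = 0`; the other vector then has a single
zero, at the place already forced.
-/

open Matrix Finset

section Walks

variable {ι : Type*} [Fintype ι] [DecidableEq ι] {A : Matrix ι ι ℕ}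

theorem Matrix.mul_le_pow_add_apply (s t : ℕ) (u l w : ι) :
    (A ^ s) u l * (A ^ t) l w ≤ (A ^ (s + t)) u w := by
  rw [pow_add, mul_apply]
  exact single_le_sum (f := fun l => (A ^ s) u l * (A ^ t) l w) (fun _ _ => Nat.zero_le _)
    (mem_univ l)

theorem Matrix.pow_add_apply_pos {s t : ℕ} {u l w : ι} (h₁ : 0 < (A ^ s) u l)
    (h₂ : 0 < (A ^ t) l w) : 0 < (A ^ (s + t)) u w :=
  (Nat.mul_pos h₁ h₂).trans_le (mul_le_pow_add_apply s t u l w)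

theorem Matrix.pow_apply_pos_of_apply_pos {v : ι} (hv : 0 < A v v) : ∀ t, 0 < (A ^ t) v v
  | 0 => by simp
  | t + 1 => pow_add_apply_pos (pow_apply_pos_of_apply_pos hv t) (by rwa [pow_one])

theorem Matrix.eq_of_pow_apply_le_one {s t k : ℕ} (hk : s + t = k) {u w l₁ l₂ : ι}
    (hA : (A ^ k) u w ≤ 1) (h₁ : 0 < (A ^ s) u l₁) (h₁' : 0 < (A ^ t) l₁ w)
    (h₂ : 0 < (A ^ s) u l₂) (h₂' : 0 < (A ^ t) l₂ w) : l₁ = l₂ := by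
  by_contra hne
  have hsum : (A ^ s) u l₁ * (A ^ t) l₁ w + (A ^ s) u l₂ * (A ^ t) l₂ w ≤ (A ^ k) u w := by
    rw [← hk, pow_add, mul_apply, ← sum_pair (f := fun l => (A ^ s) u l * (A ^ t) l w) hne]
    exact sum_le_sum_of_subset (subset_univ _)
  have := Nat.mul_pos h₁ h₁'
  have := Nat.mul_pos h₂ h₂'
  omega

theorem Matrix.pow_apply_pos_of_upper {n c : ℕ} {A : Matrix (Fin n) (Fin n) ℕ}
    (hA : ∀ i j : Fin n, i < j → (j : ℕ) ≤ c → 0 < A i j) :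
    ∀ (ℓ : ℕ) (u w : Fin n), (u : ℕ) + ℓ ≤ w → (w : ℕ) ≤ c → (ℓ = 0 → u = w) →
      0 < (A ^ ℓ) u w
  | 0, u, w, _, _, huw => by simp [huw rfl]
  | ℓ + 1, u, w, hℓ, hw, _ => by
    rcases Nat.eq_zero_or_pos ℓ with rfl | hℓ0
    · rw [zero_add, pow_one]
      exact hA u w (by omega) hw
    · refine pow_add_apply_pos (l := ⟨w - 1, by omega⟩)
        (pow_apply_pos_of_upper hA ℓ u _ (by dsimp only; omega) (by dsimp only; omega)
          (by omega)) ?_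
      rw [pow_one]
      exact hA _ w (Fin.lt_def.2 (by dsimp only; omega)) hw

end Walks

theorem Fin.card_add_card_add_two_le {m : ℕ} {S T : Finset (Fin m)} (hS : S.Nonempty)
    (hT : T.Nonempty) (h : ∀ i ∈ S, ∀ j ∈ T, (i : ℕ) + 2 < j) : #S + #T + 2 ≤ m := by
  have hS' : #S ≤ S.max' hS + 1 :=
    (card_le_card fun i hi => mem_Iic.2 (S.le_max' i hi)).trans (Fin.card_Iic _).le
  have hT' : #T ≤ m - T.min' hT :=
    (card_le_card fun j hj => mem_Ici.2 (T.min'_le j hj)).trans (Fin.card_Ici _).le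
  have := h _ (S.max'_mem hS) _ (T.min'_mem hT)
  omega

section ZeroOneVectors

variable {m : ℕ} {x : Fin m → ℕ}

theorem eq_zero_of_fVec_eq_zero (hx : ∀ i, x i = 0 ∨ x i = 1) (h : fVec x = 0) : x = 0 := by
  ext i
  refine (hx i).resolve_right fun hi => ?_
  rw [fVec, card_eq_zero, filter_eq_empty_iff] at h
  exact h (mem_univ i) hi

theorem eq_one_of_le_fVec_add_one {i₀ i : Fin m} (hx : m ≤ fVec x + 1) (h₀ : x i₀ ≠ 1)
    (hi : i ≠ i₀) : x i = 1 := by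
  by_contra h
  have hsub : univ.filter (fun j => x j = 1) ⊆ (univ.erase i₀).erase i := by
    intro j hj
    simp only [mem_filter, mem_univ, true_and] at hj
    simp only [mem_erase, mem_univ, and_true]
    exact ⟨fun e => h (e ▸ hj), fun e => h₀ (e ▸ hj)⟩
  have := card_le_card hsub
  rw [card_erase_of_mem (by simpa using hi), card_erase_of_mem (mem_univ _), card_univ,
    Fintype.card_fin] at this
  unfold fVec at hx
  omega

end ZeroOneVectors

namespace Bord

variable {n : ℕ} {x y : Fin (n - 1) → ℕ} {β : ℕ}

theorem apply_of_lt {i j : Fin n} (hij : i < j) (hj : (j : ℕ) < n - 1) :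
    Bord n x y β i j = 1 := by
  simp [Bord, hj, show (i : ℕ) < n - 1 by omega, Fin.lt_def.1 hij]

theorem pow_apply_pos_of_le (ℓ a b : ℕ) (hab : a + ℓ ≤ b) (hb : b < n - 1)
    (hℓ : ℓ = 0 → a = b) : 0 < (Bord n x y β ^ ℓ) ⟨a, by omega⟩ ⟨b, by omega⟩ :=
  pow_apply_pos_of_upper (c := n - 2)
    (fun _ _ hij hj => (apply_of_lt hij (by omega)).symm ▸ one_pos)
    ℓ _ _ hab (by dsimp only; omega) (by simpa using hℓ)

variable {v : Fin n} (hv : (v : ℕ) = n - 1)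
include hv

theorem pow_one_castLE_last_pos {i : Fin (n - 1)} (hi : x i = 1) :
    0 < (Bord n x y β ^ 1) (Fin.castLE (Nat.sub_le n 1) i) v := by
  simp [Bord, hv, hi]

theorem pow_one_last_castLE_pos {j : Fin (n - 1)} (hj : y j = 1) :
    0 < (Bord n x y β ^ 1) v (Fin.castLE (Nat.sub_le n 1) j) := by
  simp [Bord, hv, hj]

theorem pow_last_last_pos (hβ : β = 1) (t : ℕ) : 0 < (Bord n x y β ^ t) v v :=
  pow_apply_pos_of_apply_pos (by simp [Bord, hv, hβ]) t

variable (hA : ∀ u w, (Bord n x y β ^ (n - 2)) u w ≤ 1)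
include hA

theorem x_last_ne_one (hn : 5 ≤ n) : x ⟨n - 2, by omega⟩ ≠ 1 := by
  intro hx
  have hlast := pow_one_castLE_last_pos (y := y) (β := β) hv hx
  -- `0 → 1 → ⋯ → n - 2 → v` and `0 → 2 → ⋯ → n - 2 → v`
  have key := eq_of_pow_apply_le_one (s := 1) (t := n - 4 + 1) (by omega) (hA ⟨0, by omega⟩ v)
    (pow_apply_pos_of_le 1 0 1 (by omega) (by omega) (by omega))
    (pow_add_apply_pos (pow_apply_pos_of_le _ _ (n - 2) (by omega) (by omega) (by omega)) hlast)
    (pow_apply_pos_of_le 1 0 2 (by omega) (by omega) (by omega))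
    (pow_add_apply_pos (pow_apply_pos_of_le _ _ (n - 2) (by omega) (by omega) (by omega)) hlast)
  simp at key

theorem y_zero_ne_one (hn : 5 ≤ n) : y ⟨0, by omega⟩ ≠ 1 := by
  intro hy
  have hfirst := pow_one_last_castLE_pos (x := x) (β := β) hv hy
  -- `v → 0 → 1 → ⋯ → n - 2` and `v → 0 → 2 → ⋯ → n - 2`
  have key := eq_of_pow_apply_le_one (s := 1 + 1) (t := n - 4) (by omega)
    (hA v ⟨n - 2, by omega⟩)
    (pow_add_apply_pos hfirst (pow_apply_pos_of_le 1 0 1 (by omega) (by omega) (by omega)))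
    (pow_apply_pos_of_le _ _ (n - 2) (by omega) (by omega) (by omega))
    (pow_add_apply_pos hfirst (pow_apply_pos_of_le 1 0 2 (by omega) (by omega) (by omega)))
    (pow_apply_pos_of_le _ _ (n - 2) (by omega) (by omega) (by omega))
  simp at key

theorem lt_of_x_eq_one_of_y_eq_one (hn : 6 ≤ n) {i j : Fin (n - 1)} (hi : x i = 1)
    (hj : y j = 1) : (i : ℕ) + 2 < j := by
  by_contra hij
  -- the detour `0 → ⋯ → i → v → j → ⋯ → n - 2` through `v` has length `n - 2` for this `ℓ`
  obtain ⟨ℓ, hℓ⟩ : ∃ ℓ, ℓ = max (min (i : ℕ) 1) (j - 2) := ⟨_, rfl⟩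
  have key := eq_of_pow_apply_le_one (s := ℓ + 1) (t := 1 + (n - 4 - ℓ)) (by omega)
    (hA ⟨0, by omega⟩ ⟨n - 2, by omega⟩)
    (pow_apply_pos_of_le (ℓ + 1) 0 (ℓ + 1) (by omega) (by omega) (by omega))
    (pow_apply_pos_of_le (1 + (n - 4 - ℓ)) (ℓ + 1) (n - 2) (by omega) (by omega) (by omega))
    (pow_add_apply_pos (pow_apply_pos_of_le ℓ 0 i (by omega) (by omega) (by omega))
      (pow_one_castLE_last_pos hv hi))
    (pow_add_apply_pos (pow_one_last_castLE_pos hv hj)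
      (pow_apply_pos_of_le (n - 4 - ℓ) j (n - 2) (by omega) (by omega) (by omega)))
  simp only [Fin.ext_iff] at key
  omega

theorem fVec_x_le_one (hn : 4 ≤ n) (hβ : β = 1) : fVec x ≤ 1 := by
  have hloop := pow_last_last_pos (x := x) (y := y) hv hβ
  -- `i₁ → v → v → ⋯` and `i₁ → i₂ → v → ⋯`
  have key (i₁ i₂ : Fin (n - 1)) (h₁ : x i₁ = 1) (h₂ : x i₂ = 1) : ¬ i₁ < i₂ := fun hlt => by
    have := eq_of_pow_apply_le_one (s := 1) (t := 1 + (n - 4)) (by omega)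
      (hA (Fin.castLE (Nat.sub_le n 1) i₁) v)
      (pow_one_castLE_last_pos hv h₁) (hloop _)
      (pow_apply_pos_of_le 1 i₁ i₂ (by omega) (by omega) (by omega))
      (pow_add_apply_pos (pow_one_castLE_last_pos hv h₂) (hloop _))
    simp only [Fin.ext_iff] at this
    omega
  refine card_le_one.2 fun a ha b hb => ?_
  simp only [mem_filter, mem_univ, true_and] at ha hb
  exact le_antisymm (not_lt.1 (key b a hb ha)) (not_lt.1 (key a b ha hb))

theorem fVec_y_le_one (hn : 4 ≤ n) (hβ : β = 1) : fVec y ≤ 1 := by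
  have hloop := pow_last_last_pos (x := x) (y := y) hv hβ
  -- `⋯ → v → v → j₂` and `⋯ → v → j₁ → j₂`
  have key (j₁ j₂ : Fin (n - 1)) (h₁ : y j₁ = 1) (h₂ : y j₂ = 1) : ¬ j₁ < j₂ := fun hlt => by
    have := eq_of_pow_apply_le_one (s := n - 4 + 1) (t := 1) (by omega)
      (hA v (Fin.castLE (Nat.sub_le n 1) j₂))
      (hloop _) (pow_one_last_castLE_pos hv h₂)
      (pow_add_apply_pos (hloop _) (pow_one_last_castLE_pos hv h₁))
      (pow_apply_pos_of_le 1 j₁ j₂ (by omega) (by omega) (by omega))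
    simp only [Fin.ext_iff, Fin.val_castLE] at this
    omega
  refine card_le_one.2 fun a ha b hb => ?_
  simp only [mem_filter, mem_univ, true_and] at ha hb
  exact le_antisymm (not_lt.1 (key b a hb ha)) (not_lt.1 (key a b ha hb))

theorem fVec_add_fVec_add_three_le (hn : 6 ≤ n) (hx : 0 < fVec x) (hy : 0 < fVec y) :
    fVec x + fVec y + 3 ≤ n := by
  have := Fin.card_add_card_add_two_le (card_pos.1 hx) (card_pos.1 hy) fun i hi j hj =>
    lt_of_x_eq_one_of_y_eq_one hv hA hn (mem_filter.1 hi).2 (mem_filter.1 hj).2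
  unfold fVec
  omega

end Bord

/-- Corollary: if `n ≥ 6`, `A = [[T_{n−1}, x],[yᵀ, β]] ∈ Γ(n, n−2)`
and `f(x)+f(y)+β = n−2`, then either `x = (1,…,1,0)ᵀ, y = 0, β = 0`, or
`y = (0,1,…,1)ᵀ, x = 0, β = 0`. -/
theorem stmt5 (n : ℕ) (hn : 6 ≤ n) (x y : Fin (n - 1) → ℕ) (β : ℕ)
    (hx : ∀ i, x i = 0 ∨ x i = 1) (hy : ∀ i, y i = 0 ∨ y i = 1)
    (hβ : β = 0 ∨ β = 1)
    (hΓ : Gamma n (n - 2) (Bord n x y β))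
    (hsum : fVec x + fVec y + β = n - 2) :
    ((∀ i : Fin (n - 1), x i = if (i : ℕ) < n - 2 then 1 else 0) ∧ y = 0 ∧ β = 0) ∨
    ((∀ i : Fin (n - 1), y i = if (i : ℕ) = 0 then 0 else 1) ∧ x = 0 ∧ β = 0) := by
  have hA : ∀ u w, (Bord n x y β ^ (n - 2)) u w ≤ 1 := fun u w =>
    (hΓ.2 u w).elim (fun h => h ▸ zero_le_one) (·.le)
  have hv : ((⟨n - 1, by omega⟩ : Fin n) : ℕ) = n - 1 := rfl
  obtain rfl : β = 0 := hβ.resolve_right fun hβ₁ => by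
    have := Bord.fVec_x_le_one hv hA (by omega) hβ₁
    have := Bord.fVec_y_le_one hv hA (by omega) hβ₁
    omega
  rcases Nat.eq_zero_or_pos (fVec x) with hx₀ | hx₀
  · refine .inr ⟨fun i => ?_, eq_zero_of_fVec_eq_zero hx hx₀, rfl⟩
    have hy_zero := Bord.y_zero_ne_one hv hA (by omega)
    split_ifs with hi
    · rw [show i = ⟨0, by omega⟩ from Fin.ext hi]
      exact (hy _).resolve_right hy_zero
    · exact eq_one_of_le_fVec_add_one (by omega) hy_zero (Fin.ne_of_val_ne hi)
  · have hy₀ : fVec y = 0 := by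
      by_contra hy₀
      have := Bord.fVec_add_fVec_add_three_le hv hA hn hx₀ (Nat.pos_of_ne_zero hy₀)
      omega
    refine .inl ⟨fun i => ?_, eq_zero_of_fVec_eq_zero hy hy₀, rfl⟩
    have hx_last := Bord.x_last_ne_one hv hA (by omega)
    split_ifs with hi
    · exact eq_one_of_le_fVec_add_one (by omega) hx_last (Fin.ne_of_val_ne hi.ne)
    · rw [show i = ⟨n - 2, by omega⟩ from Fin.ext (by dsimp only; omega)]
      exact (hx _).resolve_right hx_last
end

section
/- Let k ≥ 5 and s ≥ 1 be integers, let x_1,…,x_s, y_1,…,y_s ∈ {0,1}^k, and let A be the (k+s)×(k+s) 0-1 matrix whose top-left k×k block is T_k, whose (k+j)-th column restricted to the first k rows is x_j (1 ≤ j ≤ s), whose (k+j)-th row restricted to the first k columns is y_jᵀ (1 ≤ j ≤ s), and whose bottom-right s×s block C satisfies C_{i,i+1} = 1 for 1 ≤ i ≤ s−1, C_{s,1} = 1, and all other entries of C are 0. If there exists i ∈ {1,…,s} such that f(x_i) ≥ 3 or f(y_i) ≥ 3, then A ∉ Γ(k+s, p) for every integer p ≥ 2. -/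
/-- The (k+s)×(k+s) matrix with top-left block `T_k`, bordered columns
`x_1, …, x_s`, bordered rows `y_1ᵀ, …, y_sᵀ`, and bottom-right s×s block the
directed cycle: `C_{a,a+1} = 1` (1 ≤ a ≤ s−1), `C_{s,1} = 1`, all other
entries 0. -/
def CycA (k s : ℕ) (x y : Fin s → Fin k → ℕ) :
    Matrix (Fin (k + s)) (Fin (k + s)) ℕ :=
  fun i j =>
    if hi : (i : ℕ) < k then
      if hj : (j : ℕ) < k then (if (i : ℕ) < (j : ℕ) then 1 else 0)
      else x ⟨(j : ℕ) - k, by have := j.isLt; omega⟩ ⟨i, hi⟩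
    else
      if hj : (j : ℕ) < k then y ⟨(i : ℕ) - k, by have := i.isLt; omega⟩ ⟨j, hj⟩
      else if ((j : ℕ) - k = (i : ℕ) - k + 1) ∨
              ((i : ℕ) - k = s - 1 ∧ (j : ℕ) - k = 0) then 1 else 0

/-! If `x_i` has ones in positions `a < b < c`, then `a → b → k+i` and `a → c → k+i` are two
distinct walks of length two in the digraph of `A`, so `(A²)_{a, k+i} ≥ 2`.  The cycle on the last
`s` vertices lets this walk be extended by any number `p - 2` of further steps, which keeps an
entry `≥ 2` in `A^p`.  Rows `y_i` are handled symmetrically, prepending the cycle walk instead. -/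

open Matrix

namespace Matrix

variable {l m o : Type*} [Fintype m]

lemma le_mul_apply (A : Matrix l m ℕ) (B : Matrix m o ℕ) (i : l) (j : m) (k : o) :
    A i j * B j k ≤ (A * B) i k :=
  Finset.single_le_sum (f := fun t => A i t * B t k) (fun _ _ => Nat.zero_le _)
    (Finset.mem_univ j)

lemma two_le_mul_apply_s13 [DecidableEq m] {A : Matrix l m ℕ} {B : Matrix m o ℕ} {i : l}
    {j₁ j₂ : m} {k : o} (hj : j₁ ≠ j₂) (h₁ : 1 ≤ A i j₁ * B j₁ k) (h₂ : 1 ≤ A i j₂ * B j₂ k) :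
    2 ≤ (A * B) i k :=
  calc 2 ≤ A i j₁ * B j₁ k + A i j₂ * B j₂ k := by omega
    _ = ∑ t ∈ ({j₁, j₂} : Finset m), A i t * B t k := by rw [Finset.sum_pair hj]
    _ ≤ (A * B) i k := Finset.sum_le_sum_of_subset (Finset.subset_univ _)

variable {n : Type*} [Fintype n] [DecidableEq n] {A : Matrix n n ℕ} {S : Set n}

lemma exists_one_le_pow_apply_of_forall_exists_out (hS : ∀ v ∈ S, ∃ w ∈ S, 1 ≤ A v w)
    (p : ℕ) : ∀ v ∈ S, ∃ w ∈ S, 1 ≤ (A ^ p) v w := by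
  induction p with
  | zero => exact fun v hv => ⟨v, hv, by simp⟩
  | succ p ih =>
    intro u hu
    obtain ⟨v, hv, huv⟩ := ih u hu
    obtain ⟨w, hw, hvw⟩ := hS v hv
    refine ⟨w, hw, ?_⟩
    rw [pow_succ]
    exact le_trans (Nat.mul_le_mul huv hvw) (le_mul_apply _ _ u v w)

lemma exists_one_le_pow_apply_of_forall_exists_in (hS : ∀ w ∈ S, ∃ v ∈ S, 1 ≤ A v w)
    (p : ℕ) : ∀ w ∈ S, ∃ v ∈ S, 1 ≤ (A ^ p) v w := by
  simpa [← transpose_pow] using exists_one_le_pow_apply_of_forall_exists_out (A := Aᵀ) hS p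

end Matrix

lemma not_Gamma_of_two_le_pow_apply {N p : ℕ} {A : Matrix (Fin N) (Fin N) ℕ} {u v : Fin N}
    (h : 2 ≤ (A ^ p) u v) : ¬ Gamma N p A := by
  rintro ⟨-, hpow⟩
  rcases hpow u v with h' | h' <;> omega

section Gamma

variable {N p : ℕ} {A : Matrix (Fin N) (Fin N) ℕ} {S : Set (Fin N)} {u v : Fin N}

lemma not_Gamma_of_two_le_sq_apply_of_forall_exists_out (hS : ∀ v ∈ S, ∃ w ∈ S, 1 ≤ A v w)
    (hv : v ∈ S) (huv : 2 ≤ (A ^ 2) u v) (hp : 2 ≤ p) : ¬ Gamma N p A := by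
  obtain ⟨w, -, hvw⟩ := exists_one_le_pow_apply_of_forall_exists_out hS (p - 2) v hv
  apply not_Gamma_of_two_le_pow_apply (u := u) (v := w)
  rw [show p = 2 + (p - 2) by omega, pow_add]
  exact le_trans (Nat.mul_le_mul huv hvw) (le_mul_apply _ _ u v w)

lemma not_Gamma_of_two_le_sq_apply_of_forall_exists_in (hS : ∀ w ∈ S, ∃ v ∈ S, 1 ≤ A v w)
    (hu : u ∈ S) (huv : 2 ≤ (A ^ 2) u v) (hp : 2 ≤ p) : ¬ Gamma N p A := by
  obtain ⟨w, -, hwu⟩ := exists_one_le_pow_apply_of_forall_exists_in hS (p - 2) u hu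
  apply not_Gamma_of_two_le_pow_apply (u := w) (v := v)
  rw [show p = (p - 2) + 2 by omega, pow_add]
  exact le_trans (Nat.mul_le_mul hwu huv) (le_mul_apply _ _ w u v)

end Gamma

lemma Finset.exists_lt_lt_of_three_le_card {α : Type*} [LinearOrder α] {S : Finset α}
    (h : 3 ≤ S.card) : ∃ a ∈ S, ∃ b ∈ S, ∃ c ∈ S, a < b ∧ b < c := by
  let e := S.orderEmbOfFin rfl
  exact ⟨e ⟨0, by omega⟩, S.orderEmbOfFin_mem rfl _, e ⟨1, by omega⟩, S.orderEmbOfFin_mem rfl _,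
    e ⟨2, by omega⟩, S.orderEmbOfFin_mem rfl _, e.strictMono (by simp), e.strictMono (by simp)⟩

section CycA

variable {k s : ℕ} (x y : Fin s → Fin k → ℕ)

lemma cycA_castAdd_castAdd (a b : Fin k) :
    CycA k s x y (Fin.castAdd s a) (Fin.castAdd s b) = if a < b then 1 else 0 := by
  simp only [CycA, Fin.val_castAdd, a.isLt, b.isLt, dif_pos, Fin.lt_def]

lemma cycA_castAdd_natAdd (a : Fin k) (i : Fin s) :
    CycA k s x y (Fin.castAdd s a) (Fin.natAdd k i) = x i a := by
  simp [CycA]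

lemma cycA_natAdd_castAdd (i : Fin s) (a : Fin k) :
    CycA k s x y (Fin.natAdd k i) (Fin.castAdd s a) = y i a := by
  simp [CycA]

lemma cycA_natAdd_natAdd_finRotate (i : Fin s) :
    CycA k s x y (Fin.natAdd k i) (Fin.natAdd k (finRotate s i)) = 1 := by
  obtain ⟨s, rfl⟩ : ∃ t, s = t + 1 := ⟨s - 1, by have := i.pos; omega⟩
  simp only [CycA, Fin.natAdd, coe_finRotate]
  split_ifs <;> grind

lemma cycA_forall_exists_out :
    ∀ v ∈ Set.range (Fin.natAdd k), ∃ w ∈ Set.range (Fin.natAdd k), 1 ≤ CycA k s x y v w := by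
  rintro _ ⟨i, rfl⟩
  exact ⟨_, ⟨finRotate s i, rfl⟩, (cycA_natAdd_natAdd_finRotate x y i).ge⟩

lemma cycA_forall_exists_in :
    ∀ w ∈ Set.range (Fin.natAdd k), ∃ v ∈ Set.range (Fin.natAdd k), 1 ≤ CycA k s x y v w := by
  rintro _ ⟨i, rfl⟩
  refine ⟨_, ⟨(finRotate s).symm i, rfl⟩, ?_⟩
  have h := cycA_natAdd_natAdd_finRotate x y ((finRotate s).symm i)
  rw [Equiv.apply_symm_apply] at h
  exact h.ge

variable {x y}

lemma two_le_cycA_sq_castAdd_natAdd {i : Fin s} {a b c : Fin k} (hab : a < b) (hbc : b < c)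
    (hb : x i b = 1) (hc : x i c = 1) :
    2 ≤ (CycA k s x y ^ 2) (Fin.castAdd s a) (Fin.natAdd k i) := by
  rw [sq]
  refine two_le_mul_apply_s13 (j₁ := Fin.castAdd s b) (j₂ := Fin.castAdd s c)
    (by simpa using hbc.ne) ?_ ?_ <;>
  simp [cycA_castAdd_castAdd, cycA_castAdd_natAdd, hab, hab.trans hbc, hb, hc]

lemma two_le_cycA_sq_natAdd_castAdd {i : Fin s} {a b c : Fin k} (hab : a < b) (hbc : b < c)
    (ha : y i a = 1) (hb : y i b = 1) :
    2 ≤ (CycA k s x y ^ 2) (Fin.natAdd k i) (Fin.castAdd s c) := by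
  rw [sq]
  refine two_le_mul_apply_s13 (j₁ := Fin.castAdd s a) (j₂ := Fin.castAdd s b)
    (by simpa using hab.ne) ?_ ?_ <;>
  simp [cycA_castAdd_castAdd, cycA_natAdd_castAdd, hbc, hab.trans hbc, ha, hb]

end CycA

theorem stmt13_general (k s : ℕ)
    (x y : Fin s → Fin k → ℕ)
    (hbig : ∃ i : Fin s, 3 ≤ fVec (x i) ∨ 3 ≤ fVec (y i)) :
    ∀ p : ℕ, 2 ≤ p → ¬ Gamma (k + s) p (CycA k s x y) := by
  intro p hp
  obtain ⟨i, hxi | hyi⟩ := hbig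
  · obtain ⟨a, -, b, hb, c, hc, hab, hbc⟩ := Finset.exists_lt_lt_of_three_le_card hxi
    exact not_Gamma_of_two_le_sq_apply_of_forall_exists_out (cycA_forall_exists_out x y)
      ⟨i, rfl⟩ (two_le_cycA_sq_castAdd_natAdd hab hbc (Finset.mem_filter.mp hb).2
        (Finset.mem_filter.mp hc).2) hp
  · obtain ⟨a, ha, b, hb, c, -, hab, hbc⟩ := Finset.exists_lt_lt_of_three_le_card hyi
    exact not_Gamma_of_two_le_sq_apply_of_forall_exists_in (cycA_forall_exists_in x y)
      ⟨i, rfl⟩ (two_le_cycA_sq_natAdd_castAdd hab hbc (Finset.mem_filter.mp ha).2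
        (Finset.mem_filter.mp hb).2) hp

/-- Lemma (i): for `k ≥ 5`, `s ≥ 1`, if some `x_i` or `y_i`
has at least three ones, then the above matrix is not in `Γ(k+s, p)` for any
`p ≥ 2`. -/
theorem stmt13 (k s : ℕ) (hk : 5 ≤ k) (hs : 1 ≤ s)
    (x y : Fin s → Fin k → ℕ)
    (hx : ∀ i j, x i j = 0 ∨ x i j = 1) (hy : ∀ i j, y i j = 0 ∨ y i j = 1)
    (hbig : ∃ i : Fin s, 3 ≤ fVec (x i) ∨ 3 ≤ fVec (y i)) :
    ∀ p : ℕ, 2 ≤ p → ¬ Gamma (k + s) p (CycA k s x y) :=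
  stmt13_general k s x y hbig
end

section
/- Let k ≥ 5 be an integer, let x_1, x_2, y_1, y_2 ∈ {0,1}^k, and let A be the (k+2)×(k+2) 0-1 matrix whose top-left k×k block is T_k, whose (k+j)-th column restricted to the first k rows is x_j (j = 1,2), whose (k+j)-th row restricted to the first k columns is y_jᵀ (j = 1,2), and whose bottom-right 2×2 block is [[0,1],[1,0]]. If there exists i ∈ {1,2} such that f(x_i) = 2 and f(y_i) = 2, then A ∉ Γ(k+2, p) for every integer p ≥ 5. -/
/-- The (k+2)×(k+2) matrix with top-left block `T_k`, bordered columns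
`x_1, x_2`, bordered rows `y_1ᵀ, y_2ᵀ`, and bottom-right 2×2 block
`[[0,1],[1,0]]`. -/
def CycA2 (k : ℕ) (x y : Fin 2 → Fin k → ℕ) :
    Matrix (Fin (k + 2)) (Fin (k + 2)) ℕ :=
  fun i j =>
    if hi : (i : ℕ) < k then
      if hj : (j : ℕ) < k then (if (i : ℕ) < (j : ℕ) then 1 else 0)
      else x ⟨(j : ℕ) - k, by have := j.isLt; omega⟩ ⟨i, hi⟩
    else
      if hj : (j : ℕ) < k then y ⟨(i : ℕ) - k, by have := i.isLt; omega⟩ ⟨j, hj⟩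
      else if (i : ℕ) ≠ (j : ℕ) then 1 else 0

/-!
Write `w` for the border vertex `k + i`, and `a < b`, `c < d` for the positions of the ones
of `x_i` and `y_i`. In the digraph of `A` there are arcs `a → b`, `a → w`, `b → w`, `w → c`,
`w → d`, `c → d`, and `w` lies on the 2-cycle between the two border vertices. Hence `w`
reaches `d` by walks of every length `≥ 1`, and for `p ≥ 3` the two distinct second vertices
`w` and `b` give two different walks of length `p` from `a` to `d`: `(A ^ p) a d ≥ 2`.
-/

namespace Matrix

variable {l m n : Type*} [Fintype m]

lemma mul_apply_pos {A : Matrix l m ℕ} {B : Matrix m n ℕ} {i : l} {j : n} {t : m}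
    (hA : 0 < A i t) (hB : 0 < B t j) : 0 < (A * B) i j := by
  rw [mul_apply]
  exact Finset.sum_pos' (fun _ _ => Nat.zero_le _) ⟨t, Finset.mem_univ t, Nat.mul_pos hA hB⟩

lemma add_le_mul_apply [DecidableEq m] (A : Matrix l m ℕ) (B : Matrix m n ℕ) (i : l) (j : n)
    {t t' : m} (h : t ≠ t') : A i t * B t j + A i t' * B t' j ≤ (A * B) i j := by
  rw [mul_apply, ← Finset.sum_pair (f := fun u => A i u * B u j) h]
  exact Finset.sum_le_sum_of_subset (Finset.subset_univ _)

variable [DecidableEq m] {A : Matrix m m ℕ}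

lemma pow_add_apply_pos_s14 {i j t : m} {r s : ℕ} (h₁ : 0 < (A ^ r) i t) (h₂ : 0 < (A ^ s) t j) :
    0 < (A ^ (r + s)) i j := by
  rw [pow_add]
  exact mul_apply_pos h₁ h₂

lemma pow_succ_apply_pos_of_sq_apply_pos {w d : m} (hcyc : 0 < (A ^ 2) w w)
    (h₁ : 0 < A w d) (h₂ : 0 < (A ^ 2) w d) (r : ℕ) : 0 < (A ^ (r + 1)) w d := by
  induction r using Nat.strong_induction_on with
  | _ r ih =>
    match r with
    | 0 => simpa using h₁
    | 1 => exact h₂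
    | r + 2 =>
      rw [show r + 2 + 1 = 2 + (r + 1) by omega]
      exact pow_add_apply_pos_s14 hcyc (ih r (by omega))

lemma two_le_pow_apply {a b w d : m} (hne : b ≠ w) (hab : 0 < A a b) (haw : 0 < A a w)
    (hbw : 0 < A b w) (hwd : ∀ r, 0 < (A ^ (r + 1)) w d) {p : ℕ} (hp : 3 ≤ p) :
    2 ≤ (A ^ p) a d := by
  obtain ⟨q, rfl⟩ : ∃ q, p = q + 3 := ⟨p - 3, by omega⟩
  have hw : 0 < (A ^ (q + 2)) w d := hwd (q + 1)
  have hb : 0 < (A ^ (q + 2)) b d := by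
    rw [show q + 2 = 1 + (q + 1) by omega]
    exact pow_add_apply_pos_s14 (by simpa using hbw) (hwd q)
  rw [show q + 3 = q + 2 + 1 by omega, pow_succ']
  have hsum := add_le_mul_apply A (A ^ (q + 2)) a d hne.symm
  have := Nat.mul_pos haw hw
  have := Nat.mul_pos hab hb
  omega

end Matrix

lemma exists_lt_of_two_le_fVec {k : ℕ} {v : Fin k → ℕ} (h : 2 ≤ fVec v) :
    ∃ a b : Fin k, a < b ∧ v a = 1 ∧ v b = 1 := by
  obtain ⟨a, ha, b, hb, hab⟩ := Finset.one_lt_card.mp h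
  simp only [Finset.mem_filter, Finset.mem_univ, true_and] at ha hb
  rcases lt_or_gt_of_ne hab with h | h
  · exact ⟨a, b, h, ha, hb⟩
  · exact ⟨b, a, h, hb, ha⟩

section CycA2

variable (k : ℕ) (x y : Fin 2 → Fin k → ℕ)

lemma CycA2_castAdd_castAdd {a b : Fin k} (h : a < b) :
    CycA2 k x y (Fin.castAdd 2 a) (Fin.castAdd 2 b) = 1 := by
  simp [CycA2, h]

lemma CycA2_castAdd_natAdd (a : Fin k) (i : Fin 2) :
    CycA2 k x y (Fin.castAdd 2 a) (Fin.natAdd k i) = x i a := by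
  simp [CycA2]

lemma CycA2_natAdd_castAdd (i : Fin 2) (c : Fin k) :
    CycA2 k x y (Fin.natAdd k i) (Fin.castAdd 2 c) = y i c := by
  simp [CycA2]

lemma CycA2_natAdd_natAdd {i j : Fin 2} (h : i ≠ j) :
    CycA2 k x y (Fin.natAdd k i) (Fin.natAdd k j) = 1 := by
  simp [CycA2, Fin.val_ne_of_ne h]

end CycA2

theorem stmt14_general (k : ℕ)
    (x y : Fin 2 → Fin k → ℕ)
    (hex : ∃ i : Fin 2, fVec (x i) = 2 ∧ fVec (y i) = 2) :
    ∀ p : ℕ, 5 ≤ p → ¬ Gamma (k + 2) p (CycA2 k x y) := by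
  intro p hp hG
  obtain ⟨i, hxi, hyi⟩ := hex
  obtain ⟨a, b, hab, hxa, hxb⟩ := exists_lt_of_two_le_fVec hxi.ge
  obtain ⟨c, d, hcd, hyc, hyd⟩ := exists_lt_of_two_le_fVec hyi.ge
  set A := CycA2 k x y
  have one_pos_of_eq {u v} (h : A u v = 1) : 0 < A u v := h ▸ Nat.one_pos
  have hi : i ≠ i.rev := by fin_cases i <;> decide
  have hcyc : 0 < (A ^ 2) (Fin.natAdd k i) (Fin.natAdd k i) := by
    rw [sq]
    exact Matrix.mul_apply_pos (one_pos_of_eq (CycA2_natAdd_natAdd k x y hi))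
      (one_pos_of_eq (CycA2_natAdd_natAdd k x y hi.symm))
  have hwd := Matrix.pow_succ_apply_pos_of_sq_apply_pos hcyc
    (one_pos_of_eq ((CycA2_natAdd_castAdd k x y i d).trans hyd))
    (sq A ▸ Matrix.mul_apply_pos (one_pos_of_eq ((CycA2_natAdd_castAdd k x y i c).trans hyc))
      (one_pos_of_eq (CycA2_castAdd_castAdd k x y hcd)))
  have h2 := Matrix.two_le_pow_apply (by simp [Fin.ext_iff]; omega)
    (one_pos_of_eq (CycA2_castAdd_castAdd k x y hab))
    (one_pos_of_eq ((CycA2_castAdd_natAdd k x y a i).trans hxa))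
    (one_pos_of_eq ((CycA2_castAdd_natAdd k x y b i).trans hxb)) hwd (by omega : 3 ≤ p)
  rcases hG.2 (Fin.castAdd 2 a) (Fin.castAdd 2 d) with h | h <;> omega

/-- Lemma (ii): for `k ≥ 5`, if for some `i ∈ {1,2}` both
`f(x_i) = 2` and `f(y_i) = 2`, then the above matrix is not in `Γ(k+2, p)`
for any `p ≥ 5`. -/
theorem stmt14 (k : ℕ) (hk : 5 ≤ k)
    (x y : Fin 2 → Fin k → ℕ)
    (hx : ∀ i j, x i j = 0 ∨ x i j = 1) (hy : ∀ i j, y i j = 0 ∨ y i j = 1)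
    (hex : ∃ i : Fin 2, fVec (x i) = 2 ∧ fVec (y i) = 2) :
    ∀ p : ℕ, 5 ≤ p → ¬ Gamma (k + 2) p (CycA2 k x y) :=
  stmt14_general k x y hex
end

section
/- Let t ≥ 2 be an integer and let A be the 3t×3t 0-1 matrix written in t×t blocks of size 3×3 in which the block in position (1,2) equals T'_3 and every other block equals T_3, where T'_3 = [[0,1,1],[0,1,1],[0,0,0]] and T_3 = [[0,1,1],[0,0,1],[0,0,0]]. Then the (i,j)-entry of A^3 equals 1 if i ≡ 1 (mod 3) and j ≡ 0 (mod 3), and equals 0 otherwise; in particular A ∈ Γ(3t, 3), and f(A) = 3t² + 1 > 3t² = f(Π_{t,3}). Consequently, the maximum of f(B) over B ∈ Γ(3t,3) is strictly greater than f(Π_{t,3}). -/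
/-- `Π_{m,n} = J_m ⊗ T_n`, with flat indices: `(i,j)` entry is `1` iff
`i mod n < j mod n`. -/
def PiMat (m n : ℕ) : Matrix (Fin (m * n)) (Fin (m * n)) ℕ :=
  fun i j => if (i : ℕ) % n < (j : ℕ) % n then 1 else 0

/-- The 3t×3t matrix made of t×t blocks of size 3×3, in which the (1,2)-block
is `T'_3 = [[0,1,1],[0,1,1],[0,0,0]]` and every other block is
`T_3 = [[0,1,1],[0,0,1],[0,0,0]]`. -/
def Amat19 (t : ℕ) : Matrix (Fin (3 * t)) (Fin (3 * t)) ℕ :=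
  fun i j =>
    if (i : ℕ) / 3 = 0 ∧ (j : ℕ) / 3 = 1 then
      (if (i : ℕ) % 3 ≤ 1 ∧ 1 ≤ (j : ℕ) % 3 then 1 else 0)
    else (if (i : ℕ) % 3 < (j : ℕ) % 3 then 1 else 0)

/-! Read `Amat19 t` as the adjacency matrix of a digraph on `{0, …, 3t-1}`: `a → b` when
`a % 3 < b % 3`, plus the single extra arc `1 → 4` (the `1` added by `T'_3`), which keeps the
residue. Along a walk of length three the residue can rise at most twice, so every such walk uses
the extra arc exactly once and in the middle: it is `i → 1 → 4 → j` with `i ≡ 0` and `j ≡ 2 (mod 3)`,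
which gives `A³`. For the counts, `Fin (m * n) ≃ Fin m × Fin n` splits an index into block and
residue, so `Π_{m,n}` has `m² · C(n, 2)` ones, and `A` has exactly one more. -/

open Finset

theorem card_filter_mod_lt_mod (m n : ℕ) :
    #{p : Fin (m * n) × Fin (m * n) | (p.1 : ℕ) % n < (p.2 : ℕ) % n} = m ^ 2 * n.choose 2 := by
  let e : (Fin m × Fin m) × (Fin n × Fin n) ≃ Fin (m * n) × Fin (m * n) :=
    (Equiv.prodProdProdComm _ _ _ _).trans (finProdFinEquiv.prodCongr finProdFinEquiv)
  have hcard : #((univ : Finset (Fin m × Fin m)) ×ˢ ({q : Fin n × Fin n | q.1 < q.2} : Finset _)) =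
      #{p : Fin (m * n) × Fin (m * n) | (p.1 : ℕ) % n < (p.2 : ℕ) % n} := by
    refine card_equiv e fun x => ?_
    simp [e, Nat.add_mul_mod_self_left, Nat.mod_eq_of_lt]
  rw [← hcard, card_product, card_univ, Fintype.card_product_filter_lt]
  simp [sq]

theorem fOnes_PiMat (m n : ℕ) : fOnes (PiMat m n) = m ^ 2 * n.choose 2 := by
  rw [fOnes, ← card_filter_mod_lt_mod]
  congr 1
  ext p
  simp [PiMat]

def Amat19Arc (a b : ℕ) : Prop := a % 3 < b % 3 ∨ (a = 1 ∧ b = 4)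

instance : DecidableRel Amat19Arc := fun _ _ => inferInstanceAs (Decidable (_ ∨ _))

theorem Amat19_apply (t : ℕ) (i j : Fin (3 * t)) :
    Amat19 t i j = if Amat19Arc i j then 1 else 0 := by
  unfold Amat19
  split_ifs <;> unfold Amat19Arc at * <;> omega

theorem Amat19_apply_eq_one_iff (t : ℕ) (i j : Fin (3 * t)) :
    Amat19 t i j = 1 ↔ Amat19Arc i j := by
  rw [Amat19_apply]
  split_ifs <;> simpa

theorem amat19Arc_path_three_iff (a b c d : ℕ) :
    Amat19Arc a b ∧ Amat19Arc b c ∧ Amat19Arc c d ↔ b = 1 ∧ c = 4 ∧ a % 3 = 0 ∧ d % 3 = 2 := by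
  unfold Amat19Arc
  omega

theorem isZeroOne_Amat19 (t : ℕ) : isZeroOne (Amat19 t) := by
  intro i j
  rw [Amat19_apply]
  split_ifs <;> simp

theorem Amat19_pow_three {t : ℕ} (ht : 2 ≤ t) (i j : Fin (3 * t)) :
    (Amat19 t ^ 3) i j = if (i : ℕ) % 3 = 0 ∧ (j : ℕ) % 3 = 2 then 1 else 0 := by
  have hterm : ∀ k l : Fin (3 * t), Amat19 t i k * Amat19 t k l * Amat19 t l j =
      if l = ⟨4, by omega⟩ then
        if k = ⟨1, by omega⟩ then (if (i : ℕ) % 3 = 0 ∧ (j : ℕ) % 3 = 2 then 1 else 0) else 0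
      else 0 := by
    intro k l
    simp only [Amat19_apply, ite_zero_mul_ite_zero, mul_one, and_assoc,
      amat19Arc_path_three_iff, Fin.ext_iff]
    split_ifs <;> omega
  simp only [pow_three', Matrix.mul_apply, Finset.sum_mul, hterm]
  rw [Finset.sum_comm]
  simp

theorem fOnes_Amat19 {t : ℕ} (ht : 2 ≤ t) : fOnes (Amat19 t) = fOnes (PiMat t 3) + 1 := by
  let extra : Fin (3 * t) × Fin (3 * t) := (⟨1, by omega⟩, ⟨4, by omega⟩)
  have hsupp : univ.filter (fun p : Fin (3 * t) × Fin (3 * t) => Amat19 t p.1 p.2 = 1) =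
      insert extra (univ.filter fun p => (p.1 : ℕ) % 3 < (p.2 : ℕ) % 3) := by
    ext ⟨i, j⟩
    simp only [mem_filter, mem_univ, true_and, mem_insert, Amat19_apply_eq_one_iff, Amat19Arc,
      extra, Prod.ext_iff, Fin.ext_iff]
    omega
  have hextra : extra ∉ univ.filter fun p => (p.1 : ℕ) % 3 < (p.2 : ℕ) % 3 := by
    simp [extra]
  rw [fOnes, hsupp, card_insert_of_notMem hextra, Nat.mul_comm 3 t, card_filter_mod_lt_mod,
    fOnes_PiMat]

/-- for `t ≥ 2`, the (i,j)-entry of `A^3` is 1 iff `i ≡ 1` and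
`j ≡ 0 (mod 3)` (1-indexed; with 0-indexing, `i % 3 = 0` and `j % 3 = 2`),
so `A ∈ Γ(3t,3)`; moreover `f(A) = 3t²+1 > 3t² = f(Π_{t,3})`, so the maximum
of `f` over `Γ(3t,3)` is strictly greater than `f(Π_{t,3})`. -/
theorem stmt19 (t : ℕ) (ht : 2 ≤ t) :
    (∀ i j : Fin (3 * t), ((Amat19 t) ^ 3) i j =
      if (i : ℕ) % 3 = 0 ∧ (j : ℕ) % 3 = 2 then 1 else 0) ∧
    Gamma (3 * t) 3 (Amat19 t) ∧
    fOnes (Amat19 t) = 3 * t ^ 2 + 1 ∧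
    fOnes (PiMat t 3) = 3 * t ^ 2 ∧
    fOnes (PiMat t 3) < fOnes (Amat19 t) ∧
    (∃ B : Matrix (Fin (3 * t)) (Fin (3 * t)) ℕ,
      Gamma (3 * t) 3 B ∧ fOnes (PiMat t 3) < fOnes B) := by
  have hcube := Amat19_pow_three ht
  have hgamma : Gamma (3 * t) 3 (Amat19 t) :=
    ⟨isZeroOne_Amat19 t, fun i j => by rw [hcube]; split_ifs <;> simp⟩
  have hPi : fOnes (PiMat t 3) = 3 * t ^ 2 := by
    rw [fOnes_PiMat, show Nat.choose 3 2 = 3 by decide, mul_comm]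
  have hA : fOnes (Amat19 t) = 3 * t ^ 2 + 1 := by rw [fOnes_Amat19 ht, hPi]
  have hlt : fOnes (PiMat t 3) < fOnes (Amat19 t) := by omega
  exact ⟨hcube, hgamma, hA, hPi, hlt, Amat19 t, hgamma, hlt⟩
end
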